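/- arXiv:1404.0987 — 2 statements merged into one kernel-verified Lean document; each statement's English description precedes it below -/
import Mathlib

section
/- Assume all parameters of the competition system are positive, q > cu, p > av, and r(cuva - pq) > pvg(cu - q) + ufq(va - p). Then every complex root of the characteristic polynomial of the Jacobian matrix of the competition system at the equilibrium E_4 = ( uq(av-p)/(cuva-pq), pv(cu-q)/(cuva-pq), 0 ) has negative real part, i.e. E_4 is locally asymptotically stable. -/
/-- Jacobian matrix of the competition system at the point (x,y,z). -/
noncomputable def compJac (p q r a b c e f g u v w x y z : ℝ) :
    Matrix (Fin 3) (Fin 3) ℝ :=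
  !![p * (1 - 2 * x / u) - a * y - b * z, -(a * x), -(b * x);
     -(c * y), q * (1 - 2 * y / v) - c * x - e * z, -(e * y);
     -(f * z), -(g * z), r * (1 - 2 * z / w) - f * x - g * y]

/-- Evaluation of the characteristic polynomial. -/
lemma eval_charpoly_aux (M : Matrix (Fin 3) (Fin 3) ℂ) (μ : ℂ) :
    M.charpoly.eval μ = (μ • (1 : Matrix (Fin 3) (Fin 3) ℂ) - M).det := by
  rw [Matrix.charpoly, ← Polynomial.coe_evalRingHom, RingHom.map_det]
  congr 1
  ext i j
  rcases eq_or_ne i j with h | h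
  · subst h
    simp [Matrix.charmatrix_apply_eq, Matrix.one_apply]
  · simp [Matrix.charmatrix_apply_ne _ _ _ h, Matrix.one_apply, h]

/-- Roots of a monic real quadratic with positive coefficients have negative
real part. -/
lemma quad_root_neg_re (B C : ℝ) (hB : 0 < B) (hC : 0 < C) (μ : ℂ)
    (h : μ ^ 2 + (B : ℂ) * μ + (C : ℂ) = 0) : μ.re < 0 := by
  have hre := congrArg Complex.re h
  have him := congrArg Complex.im h
  simp [pow_two, Complex.add_re, Complex.add_im, Complex.mul_re, Complex.mul_im] at hre him
  set s := μ.re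
  set t := μ.im
  by_contra hs
  push_neg at hs
  have h4 : t ^ 2 * (2 * s + B) = 0 := by nlinarith [him]
  have ht : t = 0 := by
    have : 2 * s + B > 0 := by linarith
    have := mul_eq_zero.mp h4
    rcases this with h5 | h5
    · exact pow_eq_zero_iff (n := 2) (by norm_num) |>.mp h5
    · linarith
  rw [ht] at hre
  nlinarith [hre]

set_option maxHeartbeats 1000000 in
/-- Stability of E₄: if all parameters are positive, q > cu, p > av, and
    r(cuva - pq) > pvg(cu - q) + ufq(va - p), then every complex root of the
    characteristic polynomial of the Jacobian at
    E₄ = ( uq(av-p)/(cuva-pq), pv(cu-q)/(cuva-pq), 0 ) has negative real part,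
    i.e. E₄ is locally asymptotically stable. -/
theorem competition_E4_stable
    (p q r a b c e f g u v w : ℝ)
    (hp : 0 < p) (hq : 0 < q) (hr : 0 < r) (ha : 0 < a) (hb : 0 < b)
    (hc : 0 < c) (he : 0 < e) (hf : 0 < f) (hg : 0 < g)
    (hu : 0 < u) (hv : 0 < v) (hw : 0 < w)
    (h1 : q > c * u) (h2 : p > a * v)
    (h3 : r * (c * u * v * a - p * q) >
          p * v * g * (c * u - q) + u * f * q * (v * a - p)) :
    ∀ μ : ℂ,
      ((compJac p q r a b c e f g u v w
          (u * q * (a * v - p) / (c * u * v * a - p * q))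
          (p * v * (c * u - q) / (c * u * v * a - p * q))
          0).charpoly.map (algebraMap ℝ ℂ)).IsRoot μ → μ.re < 0 := by
  intro μ hroot
  have hune : u ≠ 0 := ne_of_gt hu
  have hvne : v ≠ 0 := ne_of_gt hv
  set D : ℝ := c * u * v * a - p * q with hD_def
  have hD : D < 0 := by
    have h4 : c * u * (a * v) < q * p :=
      mul_lt_mul'' h1 h2 (le_of_lt (mul_pos hc hu)) (le_of_lt (mul_pos ha hv))
    rw [hD_def]; nlinarith [h4]
  have hDne : D ≠ 0 := ne_of_lt hD
  set X : ℝ := u * q * (a * v - p) / D with hX_def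
  set Y : ℝ := p * v * (c * u - q) / D with hY_def
  have hX : 0 < X :=
    div_pos_of_neg_of_neg (mul_neg_of_pos_of_neg (mul_pos hu hq) (by linarith)) hD
  have hY : 0 < Y :=
    div_pos_of_neg_of_neg (mul_neg_of_pos_of_neg (mul_pos hp hv) (by linarith)) hD
  set γ : ℝ := r - f * X - g * Y with hγ_def
  set B : ℝ := p * X / u + q * Y / v with hB_def
  set Cc : ℝ := X * Y * (p * q - a * c * u * v) / (u * v) with hC_def
  have hγ : γ < 0 := by
    have key : γ * D = r * D - (f * (u * q * (a * v - p)) + g * (p * v * (c * u - q))) := by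
      rw [hγ_def, hX_def, hY_def]
      field_simp
      ring
    have hpos : γ * D > 0 := by rw [key]; nlinarith [h3]
    nlinarith
  have hB : 0 < B := by
    apply add_pos <;> [exact div_pos (mul_pos hp hX) hu; exact div_pos (mul_pos hq hY) hv]
  have hCc : 0 < Cc := by
    apply div_pos _ (mul_pos hu hv)
    apply mul_pos (mul_pos hX hY)
    nlinarith [hD]
  -- simplify the Jacobian at the equilibrium
  have hM : compJac p q r a b c e f g u v w X Y 0 =
      !![-(p * X / u), -(a * X), -(b * X);
         -(c * Y), -(q * Y / v), -(e * Y);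
         0, 0, γ] := by
    rw [compJac]
    have e11 : p * (1 - 2 * X / u) - a * Y - b * 0 = -(p * X / u) := by
      rw [hX_def, hY_def]
      field_simp
      ring
    have e22 : q * (1 - 2 * Y / v) - c * X - e * 0 = -(q * Y / v) := by
      rw [hX_def, hY_def]
      field_simp
      ring
    have e33 : r * (1 - 2 * 0 / w) - f * X - g * Y = γ := by
      rw [hγ_def]; ring_nf
    rw [e11, e22, e33]
    norm_num
  rw [hM, ← Matrix.charpoly_map] at hroot
  have hdet : (μ • (1 : Matrix (Fin 3) (Fin 3) ℂ) -
      (!![-(p * X / u), -(a * X), -(b * X);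
          -(c * Y), -(q * Y / v), -(e * Y);
          0, 0, γ] : Matrix (Fin 3) (Fin 3) ℝ).map (algebraMap ℝ ℂ)).det = 0 := by
    rw [← eval_charpoly_aux]
    exact hroot
  rw [Matrix.det_fin_three] at hdet
  norm_num [Matrix.map_apply, Matrix.smul_apply, Matrix.one_apply, Matrix.sub_apply] at hdet
  have hfac : (μ - (γ : ℂ)) * (μ ^ 2 + (B : ℂ) * μ + (Cc : ℂ)) = 0 := by
    have hCc2 : Cc = (p * X / u) * (q * Y / v) - (a * X) * (c * Y) := by
      rw [hC_def]; field_simp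
    rw [← hdet, hB_def, hCc2]
    push_cast
    ring
  rcases mul_eq_zero.mp hfac with h | h
  · rw [sub_eq_zero.mp h]
    simpa using hγ
  · exact quad_root_neg_re B Cc hB hCc μ h
end

section
/- Assume all parameters of the competition system are positive, p > bw, r > fu, and q(fuwb - pr) > wpe(fu - r) + rcu(wb - p). Then every complex root of the characteristic polynomial of the Jacobian matrix of the competition system at the equilibrium E_5 = ( ur(bw-p)/(fuwb-rp), 0, wp(fu-r)/(fuwb-rp) ) has negative real part, i.e. E_5 is locally asymptotically stable. Likewise, if q > we, r > vg, and p(gvwe - rq) > bwq(vg - r) + avr(we - q), then every eigenvalue of the Jacobian at E_6 = ( 0, vr(we-q)/(gvwe-qr), wq(vg-r)/(gvwe-qr) ) has negative real part. -/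
open Polynomial Matrix

private lemma quad_root_neg_re_s18 (S P : ℝ) (hS : 0 < S) (hP : 0 < P) (μ : ℂ)
    (h : μ ^ 2 + (S : ℂ) * μ + (P : ℂ) = 0) : μ.re < 0 := by
  by_contra hre
  push_neg at hre
  have h1 := congrArg Complex.re h
  have h2 := congrArg Complex.im h
  simp [Complex.add_re, Complex.add_im, Complex.mul_re, Complex.mul_im, sq, pow_two] at h1 h2
  have him : μ.im = 0 := by
    rcases mul_eq_zero.mp (show μ.im * (2 * μ.re + S) = 0 by nlinarith) with h' | h'
    · exact h'
    · nlinarith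
  nlinarith [him, h1]

private lemma charpoly_aux5 (A B C D F G H : ℝ) :
    (!![A, B, C; (0:ℝ), D, 0; F, G, H]).charpoly
      = (X - Polynomial.C D) *
        (X ^ 2 - Polynomial.C (A + H) * X + Polynomial.C (A * H - C * F)) := by
  rw [Matrix.charpoly, Matrix.det_fin_three]
  simp [charmatrix_apply_eq, charmatrix_apply_ne]
  ring

private lemma charpoly_aux6 (A B C D F G H : ℝ) :
    (!![D, (0:ℝ), 0; B, A, C; F, G, H]).charpoly
      = (X - Polynomial.C D) *
        (X ^ 2 - Polynomial.C (A + H) * X + Polynomial.C (A * H - C * G)) := by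
  rw [Matrix.charpoly, Matrix.det_fin_three]
  simp [charmatrix_apply_eq, charmatrix_apply_ne]
  ring

private lemma root_neg_re (D T P : ℝ) (hD : D < 0) (hT : T < 0) (hP : 0 < P) (μ : ℂ)
    (h : (((X - Polynomial.C D) *
        (X ^ 2 - Polynomial.C T * X + Polynomial.C P)).map (algebraMap ℝ ℂ)).IsRoot μ) :
    μ.re < 0 := by
  rw [Polynomial.IsRoot, Polynomial.map_mul, Polynomial.eval_mul] at h
  rcases mul_eq_zero.mp h with h' | h'
  · simp only [Polynomial.map_sub, Polynomial.map_X, Polynomial.map_C, Polynomial.eval_sub,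
      Polynomial.eval_X, Polynomial.eval_C, sub_eq_zero] at h'
    rw [h']
    simpa using hD
  · simp only [Polynomial.map_add, Polynomial.map_sub, Polynomial.map_pow, Polynomial.map_mul,
      Polynomial.map_X, Polynomial.map_C, Polynomial.eval_add, Polynomial.eval_sub,
      Polynomial.eval_pow, Polynomial.eval_mul, Polynomial.eval_X, Polynomial.eval_C,
      Complex.coe_algebraMap] at h'
    refine quad_root_neg_re_s18 (-T) P (by linarith) hP μ ?_
    push_cast
    linear_combination h'

set_option maxHeartbeats 1000000 in
/-- Stability of E₅ and E₆: if all parameters are positive, p > bw, r > fu and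
    q(fuwb - pr) > wpe(fu - r) + rcu(wb - p), then every complex root of the
    characteristic polynomial of the Jacobian at
    E₅ = ( ur(bw-p)/(fuwb-rp), 0, wp(fu-r)/(fuwb-rp) ) has negative real part;
    likewise, if q > we, r > vg and
    p(gvwe - rq) > bwq(vg - r) + avr(we - q), then every eigenvalue of the
    Jacobian at E₆ = ( 0, vr(we-q)/(gvwe-qr), wq(vg-r)/(gvwe-qr) ) has
    negative real part. -/
theorem competition_E5_E6_stable
    (p q r a b c e f g u v w : ℝ)
    (hp : 0 < p) (hq : 0 < q) (hr : 0 < r) (ha : 0 < a) (hb : 0 < b)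
    (hc : 0 < c) (he : 0 < e) (hf : 0 < f) (hg : 0 < g)
    (hu : 0 < u) (hv : 0 < v) (hw : 0 < w) :
    (p > b * w → r > f * u →
      q * (f * u * w * b - p * r) >
        w * p * e * (f * u - r) + r * c * u * (w * b - p) →
      ∀ μ : ℂ,
        ((compJac p q r a b c e f g u v w
            (u * r * (b * w - p) / (f * u * w * b - r * p))
            0
            (w * p * (f * u - r) / (f * u * w * b - r * p))).charpoly.map
          (algebraMap ℝ ℂ)).IsRoot μ → μ.re < 0) ∧
    (q > w * e → r > v * g →
      p * (g * v * w * e - r * q) >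
        b * w * q * (v * g - r) + a * v * r * (w * e - q) →
      ∀ μ : ℂ,
        ((compJac p q r a b c e f g u v w
            0
            (v * r * (w * e - q) / (g * v * w * e - q * r))
            (w * q * (v * g - r) / (g * v * w * e - q * r))).charpoly.map
          (algebraMap ℝ ℂ)).IsRoot μ → μ.re < 0) := by
  have hune : u ≠ 0 := hu.ne'
  have hvne : v ≠ 0 := hv.ne'
  have hwne : w ≠ 0 := hw.ne'
  constructor
  · intro h1 h2 h3 μ hμ
    set x : ℝ := u * r * (b * w - p) / (f * u * w * b - r * p) with hxdef
    set z : ℝ := w * p * (f * u - r) / (f * u * w * b - r * p) with hzdef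
    have hk : f * u * w * b - r * p < 0 := by
      nlinarith [mul_lt_mul_of_pos_left h1 (mul_pos hf hu), mul_lt_mul_of_pos_right h2 hp]
    have hkne : f * u * w * b - r * p ≠ 0 := ne_of_lt hk
    have hx : 0 < x := div_pos_of_neg_of_neg (by nlinarith [mul_pos hu hr]) hk
    have hz : 0 < z := div_pos_of_neg_of_neg (by nlinarith [mul_pos hw hp]) hk
    have hM : compJac p q r a b c e f g u v w x 0 z
        = !![p * (1 - 2 * x / u) - b * z, -(a * x), -(b * x);
             0, q - c * x - e * z, 0;
             -(f * z), -(g * z), r * (1 - 2 * z / w) - f * x] := by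
      unfold compJac
      norm_num
    rw [hM, charpoly_aux5] at hμ
    have hA : p * (1 - 2 * x / u) - b * z = -(p * x / u) := by
      rw [hxdef, hzdef]; generalize hK : f * u * w * b - r * p = K at hkne ⊢; field_simp; rw [← hK]; ring
    have hH : r * (1 - 2 * z / w) - f * x = -(r * z / w) := by
      rw [hxdef, hzdef]; generalize hK : f * u * w * b - r * p = K at hkne ⊢; field_simp; rw [← hK]; ring
    refine root_neg_re _ _ _ ?_ ?_ ?_ μ hμ
    · have heq : q - c * x - e * z
          = (q * (f * u * w * b - p * r)
              - (w * p * e * (f * u - r) + r * c * u * (w * b - p)))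
            / (f * u * w * b - r * p) := by
        rw [hxdef, hzdef]; generalize hK : f * u * w * b - r * p = K at hkne ⊢; field_simp; rw [← hK]; ring
      rw [heq]
      exact div_neg_of_pos_of_neg (by linarith) hk
    · rw [hA, hH]
      have hpos : 0 < p * x / u + r * z / w := by positivity
      linarith
    · rw [hA, hH]
      have heq : -(p * x / u) * -(r * z / w) - -(b * x) * -(f * z)
          = x * z * (p * r - b * f * u * w) / (u * w) := by
        field_simp
      rw [heq]
      exact div_pos (mul_pos (mul_pos hx hz)
        (by nlinarith [mul_lt_mul_of_pos_left h1 (mul_pos hf hu),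
          mul_lt_mul_of_pos_right h2 hp])) (mul_pos hu hw)
  · intro h1 h2 h3 μ hμ
    set y : ℝ := v * r * (w * e - q) / (g * v * w * e - q * r) with hydef
    set z : ℝ := w * q * (v * g - r) / (g * v * w * e - q * r) with hzdef
    have hk : g * v * w * e - q * r < 0 := by
      nlinarith [mul_lt_mul_of_pos_left h1 (mul_pos hg hv), mul_lt_mul_of_pos_right h2 hq]
    have hkne : g * v * w * e - q * r ≠ 0 := ne_of_lt hk
    have hy : 0 < y := div_pos_of_neg_of_neg (by nlinarith [mul_pos hv hr]) hk
    have hz : 0 < z := div_pos_of_neg_of_neg (by nlinarith [mul_pos hw hq]) hk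
    have hM : compJac p q r a b c e f g u v w 0 y z
        = !![p - a * y - b * z, 0, 0;
             -(c * y), q * (1 - 2 * y / v) - e * z, -(e * y);
             -(f * z), -(g * z), r * (1 - 2 * z / w) - g * y] := by
      unfold compJac
      norm_num
    rw [hM, charpoly_aux6] at hμ
    have hA : q * (1 - 2 * y / v) - e * z = -(q * y / v) := by
      rw [hydef, hzdef]; generalize hK : g * v * w * e - q * r = K at hkne ⊢; field_simp; rw [← hK]; ring
    have hH : r * (1 - 2 * z / w) - g * y = -(r * z / w) := by
      rw [hydef, hzdef]; generalize hK : g * v * w * e - q * r = K at hkne ⊢; field_simp; rw [← hK]; ring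
    refine root_neg_re _ _ _ ?_ ?_ ?_ μ hμ
    · have heq : p - a * y - b * z
          = (p * (g * v * w * e - r * q)
              - (b * w * q * (v * g - r) + a * v * r * (w * e - q)))
            / (g * v * w * e - q * r) := by
        rw [hydef, hzdef]; generalize hK : g * v * w * e - q * r = K at hkne ⊢; field_simp; rw [← hK]; ring
      rw [heq]
      exact div_neg_of_pos_of_neg (by linarith) hk
    · rw [hA, hH]
      have hpos : 0 < q * y / v + r * z / w := by positivity
      linarith
    · rw [hA, hH]
      have heq : -(q * y / v) * -(r * z / w) - -(e * y) * -(g * z)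
          = y * z * (q * r - e * g * v * w) / (v * w) := by
        field_simp
      rw [heq]
      exact div_pos (mul_pos (mul_pos hy hz)
        (by nlinarith [mul_lt_mul_of_pos_left h1 (mul_pos hg hv),
          mul_lt_mul_of_pos_right h2 hq])) (mul_pos hv hw)
end
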